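/- Define N₀(2^ℓ) = n²·(n+2)^ℓ / n^(ℓ+1) and define N_x(2^ℓ) for x ≠ 0 by the recurrence N_x(2) = 2n² and N_x(2^ℓ) = n·N_x(2^{ℓ−1}) + n·N₀(2^{ℓ−1}) for ℓ > 1. Then N_x(2^ℓ) = n^(ℓ+1) + (n³/((n−2)(n+1)))·(n^ℓ − (n+2)^ℓ/n^ℓ) for all ℓ ≥ 1, assuming n > 2. -/
import Mathlib


/-- With `N₀(2^ℓ) = n²(n+2)^ℓ/n^(ℓ+1)`, if `Nx` satisfies `Nx(2) = 2n²` (index `ℓ = 1`) and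
`Nx(2^ℓ) = n·Nx(2^(ℓ-1)) + n·N₀(2^(ℓ-1))` for `ℓ > 1`, then for all `ℓ ≥ 1`
`Nx(2^ℓ) = n^(ℓ+1) + (n³/((n-2)(n+1)))·(n^ℓ - (n+2)^ℓ/n^ℓ)` (assuming `n > 2`). -/
theorem stmt_13 (n : ℕ) (hn : 2 < n) (Nx : ℕ → ℚ)
    (h1 : Nx 1 = 2 * (n : ℚ) ^ 2)
    (hrec : ∀ ℓ : ℕ, 2 ≤ ℓ →
      Nx ℓ = (n : ℚ) * Nx (ℓ - 1) +
        (n : ℚ) * ((n : ℚ) ^ 2 * ((n : ℚ) + 2) ^ (ℓ - 1) / (n : ℚ) ^ ℓ))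
    (ℓ : ℕ) (hℓ : 1 ≤ ℓ) :
    Nx ℓ = (n : ℚ) ^ (ℓ + 1) +
      ((n : ℚ) ^ 3 / (((n : ℚ) - 2) * ((n : ℚ) + 1))) *
        ((n : ℚ) ^ ℓ - ((n : ℚ) + 2) ^ ℓ / (n : ℚ) ^ ℓ) := by
  have hn0 : (n : ℚ) ≠ 0 := by positivity
  have hn2 : (n : ℚ) - 2 ≠ 0 := by
    have : (2 : ℚ) < n := by exact_mod_cast hn
    linarith
  have hn1 : (n : ℚ) + 1 ≠ 0 := by positivity
  induction ℓ, hℓ using Nat.le_induction with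
  | base =>
    rw [h1]
    field_simp
    ring
  | succ k hk ih =>
    have h2 : 2 ≤ k + 1 := by omega
    rw [hrec (k + 1) h2]
    simp only [Nat.add_sub_cancel]
    rw [ih]
    field_simp
    ring
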